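/- If f : ℝ → ℝ is bounded and Zygmund continuous with constant K, and ρ is a smooth even function supported in [-1,1] with ∫ρ = 1, then the second derivative of f_ε = ρ_ε * f satisfies |f_ε''(t)| ≤ C/ε for all t, where C depends only on K and on ρ (e.g. C = (K/2)·∫|ρ''|). -/

import Mathlib

open MeasureTheory Set

lemma zyg_bound (f : ℝ → ℝ) (K M : ℝ) (hbdd : ∀ t, |f t| ≤ M)
    (hZyg : ∀ t h : ℝ, 0 < h → |f (t + h) + f (t - h) - 2 * f t| ≤ K * h)
    (x h : ℝ) (hh : 0 < h) (n : ℕ) :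
    |f (x + h) - f x| * n ≤ 2 * M + n ^ 2 * K * h := by
  set g : ℝ → ℝ := fun x => f (x + h) - f x with hg
  have step : ∀ y, |g (y + h) - g y| ≤ K * h := by
    intro y
    have h1 := hZyg (y + h) h hh
    have e1 : y + h - h = y := by ring
    rw [e1] at h1
    have e2 : g (y + h) - g y = f (y + h + h) + f y - 2 * f (y + h) := by
      simp only [hg]; ring
    rw [e2]; exact h1
  have drift : ∀ m : ℕ, ∀ y, |g (y + m * h) - g y| ≤ m * K * h := by
    intro m
    induction m with
    | zero => intro y; simp
    | succ m ih =>
      intro y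
      have e : y + (m + 1 : ℕ) * h = (y + h) + m * h := by push_cast; ring
      have := ih (y + h)
      have := step y
      calc |g (y + (m+1:ℕ) * h) - g y|
          ≤ |g ((y+h) + m * h) - g (y+h)| + |g (y+h) - g y| := by
            rw [e]; exact abs_sub_le _ _ _
        _ ≤ m * K * h + K * h := add_le_add (ih (y+h)) (step y)
        _ = (m+1:ℕ) * K * h := by push_cast; ring
  have sum : ∀ m : ℕ, f (x + m * h) - f x = ∑ j ∈ Finset.range m, g (x + j * h) := by
    intro m
    induction m with
    | zero => simp
    | succ m ih =>
      rw [Finset.sum_range_succ, ← ih]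
      have e : x + (m+1:ℕ) * h = (x + m * h) + h := by push_cast; ring
      rw [e]; simp only [hg]; ring
  have key : |(n : ℝ) * g x| ≤ 2 * M + n ^ 2 * K * h := by
    have e : (n : ℝ) * g x = (f (x + n * h) - f x) + ∑ j ∈ Finset.range n, (g x - g (x + j * h)) := by
      have e2 : ∑ j ∈ Finset.range n, (g x - g (x + j * h))
          = n * g x - ∑ j ∈ Finset.range n, g (x + j * h) := by
        rw [Finset.sum_sub_distrib, Finset.sum_const, Finset.card_range, nsmul_eq_mul]
      rw [e2, ← sum n]; ring
    rw [e]
    have hb1 : |f (x + n * h) - f x| ≤ 2 * M := by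
      have := (abs_sub (f (x + n * h)) (f x)).trans (add_le_add (hbdd _) (hbdd _))
      linarith
    have hb2 : |∑ j ∈ Finset.range n, (g x - g (x + j * h))| ≤ n ^ 2 * K * h := by
      calc |∑ j ∈ Finset.range n, (g x - g (x + j * h))|
          ≤ ∑ j ∈ Finset.range n, |g x - g (x + j * h)| := Finset.abs_sum_le_sum_abs _ _
        _ ≤ ∑ j ∈ Finset.range n, (n : ℝ) * K * h := by
            refine Finset.sum_le_sum fun j hj => ?_
            rw [abs_sub_comm]
            refine (drift j x).trans ?_
            have hKh : 0 ≤ K * h := by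
              have h0 := hZyg 0 h hh
              have := abs_nonneg (f (0 + h) + f (0 - h) - 2 * f 0)
              linarith
            have : (j : ℝ) ≤ n := by
              exact_mod_cast (Finset.mem_range.mp hj).le
            nlinarith
        _ = n ^ 2 * K * h := by rw [Finset.sum_const, Finset.card_range]; push_cast; ring
    calc |(f (x + n * h) - f x) + ∑ j ∈ Finset.range n, (g x - g (x + j * h))|
        ≤ |f (x + n * h) - f x| + |∑ j ∈ Finset.range n, (g x - g (x + j * h))| := abs_add_le _ _
      _ ≤ 2 * M + n ^ 2 * K * h := add_le_add hb1 hb2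
  calc |f (x + h) - f x| * n = |(n:ℝ) * g x| := by
        rw [abs_mul, Nat.abs_cast]; simp only [hg]; ring
    _ ≤ 2 * M + n ^ 2 * K * h := key

lemma zyg_continuous (f : ℝ → ℝ) (K M : ℝ) (hbdd : ∀ t, |f t| ≤ M)
    (hZyg : ∀ t h : ℝ, 0 < h → |f (t + h) + f (t - h) - 2 * f t| ≤ K * h) :
    Continuous f := by
  have hM : 0 ≤ M := (abs_nonneg _).trans (hbdd 0)
  have hK : 0 ≤ K := by
    have h0 := hZyg 0 1 one_pos
    have := abs_nonneg (f (0 + 1) + f (0 - 1) - 2 * f 0)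
    linarith
  have key : ∀ x y : ℝ, ∀ n : ℕ, |f y - f x| * n ≤ 2 * M + n ^ 2 * K * |y - x| := by
    intro x y n
    rcases lt_trichotomy x y with hxy | hxy | hxy
    · have := zyg_bound f K M hbdd hZyg x (y - x) (by linarith) n
      rw [abs_of_pos (by linarith : (0:ℝ) < y - x)]
      have e : x + (y - x) = y := by ring
      rw [e] at this; exact this
    · subst hxy; simp; positivity
    · have := zyg_bound f K M hbdd hZyg y (x - y) (by linarith) n
      rw [abs_of_neg (by linarith : y - x < 0)]
      have e : y + (x - y) = x := by ring
      rw [e, abs_sub_comm] at this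
      have e2 : -(y - x) = x - y := by ring
      rw [e2]; exact this
  rw [continuous_iff_continuousAt]
  intro x
  rw [Metric.continuousAt_iff]
  intro δ hδ
  obtain ⟨n, hn⟩ := exists_nat_gt (4 * M / δ + 1)
  have hn1 : (1:ℝ) ≤ n := by
    have : 0 ≤ 4 * M / δ := by positivity
    linarith
  have hnpos : (0:ℝ) < n := by linarith
  have h2M : 2 * M < n * δ / 2 := by
    have : 4 * M / δ < n := by linarith
    rw [div_lt_iff₀ hδ] at this
    linarith
  refine ⟨δ / (2 * (n ^ 2 * K + 1)), by positivity, fun {y} hy => ?_⟩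
  rw [Real.dist_eq] at hy ⊢
  have hk := key x y n
  have hb : n ^ 2 * K * |y - x| < n * δ / 2 := by
    have h1 : n ^ 2 * K * |y - x| ≤ n ^ 2 * K * (δ / (2 * (n ^ 2 * K + 1))) := by
      apply mul_le_mul_of_nonneg_left hy.le (by positivity)
    have h2 : n ^ 2 * K * (δ / (2 * (n ^ 2 * K + 1))) < n * δ / 2 := by
      rw [mul_div_assoc']
      rw [div_lt_div_iff₀ (by positivity) (by norm_num)]
      have hn2 : (n:ℝ) ≤ n ^ 2 := by nlinarith
      nlinarith [mul_nonneg (sub_nonneg.mpr hn1) (mul_nonneg (mul_nonneg (sq_nonneg (n:ℝ)) hK) hδ.le), mul_pos hnpos hδ]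
    linarith
  have : |f y - f x| * n < n * δ := by linarith
  calc |f y - f x| = |f y - f x| * n / n := by field_simp
    _ < n * δ / n := by exact div_lt_div_of_pos_right this hnpos
    _ = δ := by field_simp

open scoped Convolution

set_option maxHeartbeats 1000000 in
/-- Second derivative of the mollification of a bounded Zygmund function: `|f_ε''| ≤ C/ε`
with `C = (K/2) ∫|ρ''|`. -/
theorem stmt_2
    (f : ℝ → ℝ) (K M : ℝ) (hbdd : ∀ t, |f t| ≤ M)
    (hZyg : ∀ t h : ℝ, 0 < h → |f (t + h) + f (t - h) - 2 * f t| ≤ K * h)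
    (ρ : ℝ → ℝ) (hρ_smooth : ContDiff ℝ (⊤ : ℕ∞) ρ) (hρ_even : ∀ t, ρ (-t) = ρ t)
    (hρ_supp : ∀ t, t ∉ Icc (-1 : ℝ) 1 → ρ t = 0)
    (hρ_int : ∫ t, ρ t = 1)
    (ε : ℝ) (hε : ε ∈ Ioc (0 : ℝ) 1) (t : ℝ) :
    |deriv (deriv (fun τ => ∫ s, (1 / ε) * ρ ((τ - s) / ε) * f s)) t| ≤
      ((K / 2) * ∫ s, |deriv (deriv ρ) s|) / ε := by
  obtain ⟨hε0, hε1⟩ := hε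
  have hf_cont : Continuous f := zyg_continuous f K M hbdd hZyg
  have hK : 0 ≤ K := by
    have h0 := hZyg 0 1 one_pos
    have := abs_nonneg (f (0 + 1) + f (0 - 1) - 2 * f 0)
    linarith
  -- derivatives of ρ
  have hρi : ContDiff ℝ ((⊤:ℕ∞) : WithTop ℕ∞) ρ := hρ_smooth.of_le (by simp)
  have hρ_diff : Differentiable ℝ ρ := (contDiff_infty_iff_deriv.mp hρi).1
  have hρ'_smooth : ContDiff ℝ ((⊤:ℕ∞) : WithTop ℕ∞) (deriv ρ) := (contDiff_infty_iff_deriv.mp hρi).2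
  have hρ'_diff : Differentiable ℝ (deriv ρ) := (contDiff_infty_iff_deriv.mp hρ'_smooth).1
  have hρ''_cont : Continuous (deriv (deriv ρ)) := (contDiff_infty_iff_deriv.mp hρ'_smooth).2.continuous
  -- supports
  have hρ'_supp : ∀ x, x ∉ Icc (-1 : ℝ) 1 → deriv ρ x = 0 := by
    intro x hx
    have hU : IsOpen (Icc (-1:ℝ) 1)ᶜ := isClosed_Icc.isOpen_compl
    have hev : ρ =ᶠ[nhds x] (fun _ => 0) :=
      Filter.eventuallyEq_of_mem (hU.mem_nhds hx) (fun y hy => hρ_supp y hy)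
    rw [hev.deriv_eq]; simp
  have hρ''_supp : ∀ x, x ∉ Icc (-1 : ℝ) 1 → deriv (deriv ρ) x = 0 := by
    intro x hx
    have hU : IsOpen (Icc (-1:ℝ) 1)ᶜ := isClosed_Icc.isOpen_compl
    have hev : deriv ρ =ᶠ[nhds x] (fun _ => 0) :=
      Filter.eventuallyEq_of_mem (hU.mem_nhds hx) (fun y hy => hρ'_supp y hy)
    rw [hev.deriv_eq]; simp
  -- evenness of second derivative
  have hρ'_odd : ∀ x, deriv ρ (-x) = - deriv ρ x := by
    intro x
    have : deriv (fun y => ρ (-y)) x = - deriv ρ (-x) := deriv_comp_neg ρ x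
    have e : (fun y => ρ (-y)) = ρ := funext hρ_even
    rw [e] at this
    linarith [this]
  have hρ''_even : ∀ x, deriv (deriv ρ) (-x) = deriv (deriv ρ) x := by
    intro x
    have h1 : deriv (fun y => deriv ρ (-y)) x = - deriv (deriv ρ) (-x) := deriv_comp_neg (deriv ρ) x
    have e : (fun y => deriv ρ (-y)) = fun y => - deriv ρ y := funext hρ'_odd
    rw [e, deriv.fun_neg] at h1
    linarith [h1]
  -- the mollifier and its derivatives
  set φ : ℝ → ℝ := fun x => (1/ε) * ρ (x/ε) with hφ
  set φ' : ℝ → ℝ := fun x => (1/ε^2) * deriv ρ (x/ε) with hφ'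
  set φ'' : ℝ → ℝ := fun x => (1/ε^3) * deriv (deriv ρ) (x/ε) with hφ''
  have hid : ∀ x : ℝ, HasDerivAt (fun y : ℝ => y / ε) (1/ε) x := fun x => by
    simpa using (hasDerivAt_id x).div_const ε
  have hdφ : ∀ x, HasDerivAt φ (φ' x) x := by
    intro x
    have h1 : HasDerivAt (fun y => ρ (y/ε)) (deriv ρ (x/ε) * (1/ε)) x :=
      (hρ_diff (x/ε)).hasDerivAt.comp x (hid x)
    have := h1.const_mul (1/ε)
    convert this using 1
    rfl
    rfl
    simp only [hφ']; ring
  have hdφ' : ∀ x, HasDerivAt φ' (φ'' x) x := by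
    intro x
    have h1 : HasDerivAt (fun y => deriv ρ (y/ε)) (deriv (deriv ρ) (x/ε) * (1/ε)) x :=
      by have := (hρ'_diff (x/ε)).hasDerivAt.comp x (hid x); exact this
    have := h1.const_mul (1/ε^2)
    convert this using 1
    rfl
    rfl
    simp only [hφ'']; ring
  have hederiv1 : deriv φ = φ' := funext fun x => (hdφ x).deriv
  have hederiv2 : deriv φ' = φ'' := funext fun x => (hdφ' x).deriv
  -- compact supports
  have hsupp : ∀ (g : ℝ → ℝ), (∀ x, x ∉ Icc (-1:ℝ) 1 → g x = 0) →
      ∀ x, x ∉ Icc (-ε) ε → (fun y => g (y/ε)) x = 0 := by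
    intro g hg x hx
    apply hg
    intro hmem
    apply hx
    constructor
    · have := hmem.1; rw [le_div_iff₀ hε0] at this; nlinarith [hmem.1, hmem.2]
    · have := hmem.2; rw [div_le_iff₀ hε0] at this; nlinarith
  have hφ_supp : ∀ x, x ∉ Icc (-ε) ε → φ x = 0 := by
    intro x hx; simp only [hφ]; rw [show ρ (x/ε) = 0 from hsupp ρ hρ_supp x hx]; ring
  have hφ'_supp : ∀ x, x ∉ Icc (-ε) ε → φ' x = 0 := by
    intro x hx; simp only [hφ']; rw [show (deriv ρ) (x/ε) = 0 from hsupp (deriv ρ) hρ'_supp x hx]; ring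
  have hφ''_supp : ∀ x, x ∉ Icc (-ε) ε → φ'' x = 0 := by
    intro x hx; simp only [hφ'']; rw [show (deriv (deriv ρ)) (x/ε) = 0 from hsupp (deriv (deriv ρ)) hρ''_supp x hx]; ring
  have hφ_cs : HasCompactSupport φ := HasCompactSupport.intro isCompact_Icc hφ_supp
  have hφ'_cs : HasCompactSupport φ' := HasCompactSupport.intro isCompact_Icc hφ'_supp
  have hφ''_cs : HasCompactSupport φ'' := HasCompactSupport.intro isCompact_Icc hφ''_supp
  have hφ_smooth : ContDiff ℝ ((⊤:ℕ∞) : WithTop ℕ∞) φ :=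
    ContDiff.mul contDiff_const (hρi.comp (contDiff_id.div_const ε))
  have hφ'_smooth : ContDiff ℝ ((⊤:ℕ∞) : WithTop ℕ∞) φ' :=
    ContDiff.mul contDiff_const (hρ'_smooth.comp (contDiff_id.div_const ε))
  have hφ''_cont : Continuous φ'' :=
    (continuous_const.mul (hρ''_cont.comp (continuous_id.div_const ε)))
  have hLI : MeasureTheory.LocallyIntegrable f := hf_cont.locallyIntegrable
  set L := ContinuousLinearMap.mul ℝ ℝ with hL
  -- identify the function with a convolution
  have hfconv : (fun τ => ∫ s, (1 / ε) * ρ ((τ - s) / ε) * f s) = f ⋆[L] φ := by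
    funext τ
    simp only [convolution, hL, ContinuousLinearMap.mul_apply', hφ]
    congr 1
    funext s
    ring
  have e1 : deriv (f ⋆[L] φ) = f ⋆[L] φ' := by
    funext x
    have := (HasCompactSupport.hasDerivAt_convolution_right L hLI hφ_cs
      (hφ_smooth.of_le (by exact_mod_cast le_top)) x).deriv
    rw [this, hederiv1]
  have e2 : deriv (f ⋆[L] φ') = f ⋆[L] φ'' := by
    funext x
    have := (HasCompactSupport.hasDerivAt_convolution_right L hLI hφ'_cs
      (hφ'_smooth.of_le (by exact_mod_cast le_top)) x).deriv
    rw [this, hederiv2]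
  rw [hfconv, e1, e2]
  -- basic integrability facts
  have hφ''_even : ∀ x, φ'' (-x) = φ'' x := by
    intro x
    simp only [hφ'']
    rw [neg_div, hρ''_even]
  have hφ''_int : Integrable φ'' := hφ''_cont.integrable_of_hasCompactSupport hφ''_cs
  have hmb : ∀ c : ℝ, ∃ C, ∀ u : ℝ, ‖f (c + u)‖ ≤ C := by
    intro c; exact ⟨M, fun u => by rw [Real.norm_eq_abs]; exact hbdd _⟩
  have hint1 : Integrable (fun u => f (t - u) * φ'' u) := by
    refine hφ''_int.bdd_mul (c := M) ((hf_cont.comp (continuous_const.sub continuous_id)).aestronglyMeasurable) (ae_of_all _ fun u => ?_)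
    rw [Real.norm_eq_abs]; exact hbdd _
  have hint2 : Integrable (fun u => f (t + u) * φ'' u) := by
    refine hφ''_int.bdd_mul (c := M) ((hf_cont.comp (continuous_const.add continuous_id)).aestronglyMeasurable) (ae_of_all _ fun u => ?_)
    rw [Real.norm_eq_abs]; exact hbdd _
  -- the second derivative as an integral
  have hIdef : (f ⋆[L] φ'') t = ∫ s, f s * φ'' (t - s) := by
    simp only [convolution, hL, ContinuousLinearMap.mul_apply']
  have hI1 : (∫ s, f s * φ'' (t - s)) = ∫ u, f (t - u) * φ'' u := by
    have := integral_sub_left_eq_self (fun u => f (t - u) * φ'' u) (volume) t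
    simp only [sub_sub_cancel] at this
    exact this
  have hI2 : (∫ u, f (t - u) * φ'' u) = ∫ u, f (t + u) * φ'' u := by
    have := integral_neg_eq_self (fun u => f (t + u) * φ'' u) (volume)
    calc (∫ u, f (t - u) * φ'' u) = ∫ u, f (t + -u) * φ'' (-u) := by
          congr 1; funext u; rw [hφ''_even, ← sub_eq_add_neg]
      _ = ∫ u, f (t + u) * φ'' u := this
  set I : ℝ := (f ⋆[L] φ'') t with hIdef2
  -- integral of φ'' is zero
  have hzero : (∫ u, φ'' u) = 0 := by
    have hsub : Function.support φ'' ⊆ Ioc (-2 : ℝ) 2 := by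
      intro u hu
      have hmem : u ∈ Icc (-ε) ε := by
        by_contra h; exact hu (hφ''_supp u h)
      exact ⟨by linarith [hmem.1, hε1], by linarith [hmem.2, hε1]⟩
    rw [← intervalIntegral.integral_eq_integral_of_support_subset hsub]
    rw [intervalIntegral.integral_deriv_eq_sub' φ' hederiv2
      (fun x _ => (hdφ' x).differentiableAt) (hφ''_cont.continuousOn)]
    rw [hφ'_supp 2 (fun hin => by linarith [hin.1, hin.2]),
      hφ'_supp (-2) (fun hin => by linarith [hin.1, hin.2])]
    ring
  have h2I : 2 * I = ∫ u, (f (t + u) + f (t - u) - 2 * f t) * φ'' u := by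
    have e : (fun u => (f (t + u) + f (t - u) - 2 * f t) * φ'' u)
        = fun u => (f (t + u) * φ'' u + f (t - u) * φ'' u) - (2 * f t) * φ'' u :=
      funext fun u => by ring
    have hadd : Integrable (fun u => f (t + u) * φ'' u + f (t - u) * φ'' u) := hint2.add hint1
    rw [e, integral_sub hadd (hφ''_int.const_mul _), integral_add hint2 hint1,
      integral_const_mul, hzero]
    rw [hIdef, hI1, hI2]
    ring
  set J : ℝ := ∫ s, |deriv (deriv ρ) s| with hJdef
  have hJ : 0 ≤ J := integral_nonneg fun s => abs_nonneg _
  have hptwise : ∀ u : ℝ, ‖(f (t + u) + f (t - u) - 2 * f t) * φ'' u‖ ≤ (K * ε) * |φ'' u| := by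
    intro u
    rw [Real.norm_eq_abs, abs_mul]
    by_cases hu : φ'' u = 0
    · simp [hu]
    · have hmem : u ∈ Icc (-ε) ε := by
        by_contra hmem; exact hu (hφ''_supp u hmem)
      have habs_u : |u| ≤ ε := abs_le.mpr ⟨hmem.1, hmem.2⟩
      have hfa : |f (t + u) + f (t - u) - 2 * f t| ≤ K * ε := by
        rcases lt_trichotomy u 0 with hlt | heq | hgt
        · have h1 := hZyg t (-u) (by linarith)
          have e1 : f (t + -u) + f (t - -u) - 2 * f t = f (t + u) + f (t - u) - 2 * f t := by
            rw [sub_neg_eq_add, ← sub_eq_add_neg]; ring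
          rw [e1] at h1
          refine h1.trans ?_
          have h2 : -u ≤ ε := by rw [abs_of_neg hlt] at habs_u; exact habs_u
          exact mul_le_mul_of_nonneg_left h2 hK
        · subst heq
          rw [show f (t + 0) + f (t - 0) - 2 * f t = 0 by rw [add_zero, sub_zero]; ring, abs_zero]
          positivity
        · have h1 := hZyg t u hgt
          refine h1.trans ?_
          have h2 : u ≤ ε := by rw [abs_of_pos hgt] at habs_u; exact habs_u
          exact mul_le_mul_of_nonneg_left h2 hK
      exact mul_le_mul_of_nonneg_right hfa (abs_nonneg _)
  have hdom : Integrable (fun u => (K * ε) * |φ'' u|) := hφ''_int.abs.const_mul _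
  have hbound2 : |2 * I| ≤ (K * ε) * ∫ u, |φ'' u| := by
    rw [h2I, ← Real.norm_eq_abs]
    calc ‖∫ u, (f (t + u) + f (t - u) - 2 * f t) * φ'' u‖
        ≤ ∫ u, (K * ε) * |φ'' u| := norm_integral_le_of_norm_le hdom (ae_of_all _ hptwise)
      _ = (K * ε) * ∫ u, |φ'' u| := integral_const_mul _ _
  have habsint : (∫ u, |φ'' u|) = (1 / ε ^ 2) * J := by
    have e : (fun u => |φ'' u|) = fun u => (1 / ε ^ 3) * |deriv (deriv ρ) (u / ε)| := by
      funext u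
      simp only [hφ'']
      rw [abs_mul, abs_of_pos (by positivity : (0:ℝ) < 1 / ε ^ 3)]
    rw [e, integral_const_mul,
      MeasureTheory.Measure.integral_comp_div (fun y => |deriv (deriv ρ) y|) ε]
    rw [abs_of_pos hε0, smul_eq_mul, hJdef]
    field_simp
  have htwoabs : |2 * I| = 2 * |I| := by rw [abs_mul]; norm_num
  rw [habsint] at hbound2
  rw [htwoabs] at hbound2
  have : (K * ε) * ((1 / ε ^ 2) * J) = (K / ε) * J := by field_simp
  rw [this] at hbound2
  calc |I| ≤ ((K / ε) * J) / 2 := by linarith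
    _ = ((K / 2) * J) / ε := by ring
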